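/- arXiv:2112.02220 — 3 statements merged into one kernel-verified Lean document; each statement's English description precedes it below -/
import Mathlib

section
/- Let H̃ be a real (n−1) × n matrix of full row rank with unit null vector v. For s in the zonotope R(H̃), define f_min(s) = min{ λ ∈ ℝ : λv + H̃⁺s ∈ [0,1]^n } and f_max(s) = max{ λ ∈ ℝ : λv + H̃⁺s ∈ [0,1]^n }. Then for every s ∈ R(H̃), f_max(s) + f_min(H̃𝟙 − s) = 𝟙ᵀ v, where 𝟙 ∈ ℝ^n is the all-ones vector. -/
open Matrix

/-- Moore–Penrose pseudoinverse of a full-row-rank matrix. -/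
noncomputable def pinv (n : ℕ) (H : Matrix (Fin (n - 1)) (Fin n) ℝ) :
    Matrix (Fin n) (Fin (n - 1)) ℝ :=
  Hᵀ * (H * Hᵀ)⁻¹

/-- Minimal coordinate `λ` such that `λ v + H⁺ s` lies in the unit cube. -/
noncomputable def fmin (n : ℕ) (H : Matrix (Fin (n - 1)) (Fin n) ℝ)
    (v : Fin n → ℝ) (s : Fin (n - 1) → ℝ) : ℝ :=
  sInf {l : ℝ | l • v + (pinv n H).mulVec s ∈ Set.Icc (0 : Fin n → ℝ) 1}

/-- Maximal coordinate `λ` such that `λ v + H⁺ s` lies in the unit cube. -/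
noncomputable def fmax (n : ℕ) (H : Matrix (Fin (n - 1)) (Fin n) ℝ)
    (v : Fin n → ℝ) (s : Fin (n - 1) → ℝ) : ℝ :=
  sSup {l : ℝ | l • v + (pinv n H).mulVec s ∈ Set.Icc (0 : Fin n → ℝ) 1}

private lemma sInf_reflect (S : Set ℝ) (c : ℝ) (hne : S.Nonempty) (hbdd : BddAbove S) :
    sInf {l : ℝ | c - l ∈ S} = c - sSup S := by
  have hglb : IsGLB {l : ℝ | c - l ∈ S} (c - sSup S) := by
    constructor
    · intro l hl
      have : c - l ≤ sSup S := le_csSup hbdd hl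
      linarith
    · intro b hb
      have : sSup S ≤ c - b := by
        apply csSup_le hne
        intro m hm
        have : b ≤ c - m := hb (show c - (c - m) ∈ S by simpa using hm)
        linarith
      linarith
  obtain ⟨m, hm⟩ := hne
  exact hglb.csInf_eq ⟨c - m, show c - (c - m) ∈ S by simpa using hm⟩

theorem fmax_add_fmin_reflection (n : ℕ) (hn : 1 ≤ n)
    (H : Matrix (Fin (n - 1)) (Fin n) ℝ)
    (hrank : H.rank = n - 1)
    (v : Fin n → ℝ) (hv : H.mulVec v = 0) (hunit : ∑ i, (v i) ^ 2 = 1)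
    (s : Fin (n - 1) → ℝ)
    (hs : s ∈ (fun x => H.mulVec x) '' (Set.Icc (0 : Fin n → ℝ) 1)) :
    fmax n H v s + fmin n H v (H.mulVec 1 - s) = ∑ i, v i := by
  obtain ⟨x₀, hx₀, hHx₀⟩ := hs
  set c : ℝ := ∑ i, v i with hc
  have hvv : v ⬝ᵥ v = 1 := by simpa [dotProduct, sq] using hunit
  have hvne : v ≠ 0 := by
    intro h; rw [h] at hvv; simp [dotProduct] at hvv
  -- H * Hᵀ invertible
  have hdet : IsUnit (H * Hᵀ).det := by
    have h1 : (H * Hᵀ).rank = n - 1 := by rw [Matrix.rank_self_mul_transpose, hrank]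
    have h2 : Function.Injective (H * Hᵀ).mulVec := by
      rw [← Matrix.coe_mulVecLin, ← LinearMap.ker_eq_bot,
        ← Submodule.finrank_eq_zero (R := ℝ)]
      have h3 := LinearMap.finrank_range_add_finrank_ker (H * Hᵀ).mulVecLin
      have h4 : Module.finrank ℝ (Fin (n - 1) → ℝ) = n - 1 := by simp
      rw [h4] at h3
      have : Module.finrank ℝ ↥(LinearMap.range (H * Hᵀ).mulVecLin) = n - 1 := h1
      omega
    rw [← Matrix.isUnit_iff_isUnit_det]
    exact Matrix.mulVec_injective_iff_isUnit.mp h2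
  -- H * pinv = 1
  have hHP : H * pinv n H = 1 := by
    rw [pinv, ← Matrix.mul_assoc, Matrix.mul_nonsing_inv _ hdet]
  -- kernel is spanned by v
  have hker : ∀ w : Fin n → ℝ, H.mulVec w = 0 → ∃ t : ℝ, w = t • v := by
    intro w hw
    have hker1 : Module.finrank ℝ (LinearMap.ker H.mulVecLin) = 1 := by
      have h3 := LinearMap.finrank_range_add_finrank_ker H.mulVecLin
      have h4 : Module.finrank ℝ (Fin n → ℝ) = n := by simp
      rw [h4] at h3
      have : Module.finrank ℝ ↥(LinearMap.range H.mulVecLin) = n - 1 := hrank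
      omega
    have hspan : Submodule.span ℝ {v} = LinearMap.ker H.mulVecLin := by
      apply Submodule.eq_of_le_of_finrank_eq
      · rw [Submodule.span_le, Set.singleton_subset_iff]; exact hv
      · rw [hker1, finrank_span_singleton hvne]
    have : w ∈ Submodule.span ℝ {v} := by rw [hspan]; exact hw
    obtain ⟨t, ht⟩ := Submodule.mem_span_singleton.mp this
    exact ⟨t, ht.symm⟩
  -- v ⊥ range of pinv
  have hperp : ∀ u : Fin (n - 1) → ℝ, v ⬝ᵥ (pinv n H).mulVec u = 0 := by
    intro u
    rw [pinv, ← Matrix.mulVec_mulVec, Matrix.dotProduct_mulVec, Matrix.vecMul_transpose, hv]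
    simp
  -- pinv ∘ H = orthogonal projection
  have hPs : ∀ y : Fin n → ℝ, (pinv n H).mulVec (H.mulVec y) = y - (v ⬝ᵥ y) • v := by
    intro y
    have hker0 : H.mulVec (y - (pinv n H).mulVec (H.mulVec y)) = 0 := by
      rw [Matrix.mulVec_sub, Matrix.mulVec_mulVec, hHP]
      simp
    obtain ⟨t, ht⟩ := hker _ hker0
    have hdot : v ⬝ᵥ (y - (pinv n H).mulVec (H.mulVec y)) = t := by
      rw [ht, dotProduct_smul, hvv]; simp
    rw [dotProduct_sub, hperp] at hdot
    have : y - (pinv n H).mulVec (H.mulVec y) = (v ⬝ᵥ y) • v := by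
      rw [ht, ← hdot]; ring_nf
    linear_combination (norm := abel) -this
  set a : ℝ := v ⬝ᵥ x₀ with ha
  have h1 : (pinv n H).mulVec s = x₀ - a • v := by rw [← hHx₀, hPs]
  have hv1 : v ⬝ᵥ (1 : Fin n → ℝ) = c := by simp [dotProduct, hc]
  have h2 : (pinv n H).mulVec (H.mulVec 1 - s) = (1 - x₀) - (c - a) • v := by
    rw [← hHx₀, ← Matrix.mulVec_sub, hPs, dotProduct_sub, hv1]
  set S : Set ℝ := {l : ℝ | l • v + (pinv n H).mulVec s ∈ Set.Icc (0 : Fin n → ℝ) 1} with hS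
  have hmemS : ∀ l : ℝ, l ∈ S ↔ ∀ i, 0 ≤ l * v i + (x₀ i - a * v i) ∧
      l * v i + (x₀ i - a * v i) ≤ 1 := by
    intro l
    rw [hS, Set.mem_setOf_eq, h1, Set.mem_Icc]
    simp only [Pi.le_def, Pi.add_apply, Pi.sub_apply, Pi.smul_apply, Pi.zero_apply,
      Pi.one_apply, smul_eq_mul]
    constructor
    · rintro ⟨hl, hr⟩ i; exact ⟨hl i, hr i⟩
    · intro h; exact ⟨fun i => (h i).1, fun i => (h i).2⟩
  have hne : S.Nonempty := by
    refine ⟨a, (hmemS a).mpr fun i => ?_⟩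
    have h0 := hx₀.1 i
    have h1' := hx₀.2 i
    simp only [Pi.zero_apply] at h0
    simp only [Pi.one_apply] at h1'
    constructor <;> nlinarith
  have hbdd : BddAbove S := by
    obtain ⟨i, hi⟩ : ∃ i, v i ≠ 0 := by
      by_contra h
      push_neg at h
      apply hvne; funext i; exact h i
    rcases hi.lt_or_gt with hneg | hpos
    · refine ⟨-(x₀ i - a * v i) / v i, fun l hl => ?_⟩
      have h := ((hmemS l).mp hl i).1
      rw [le_div_iff_of_neg hneg]
      linarith
    · refine ⟨(1 - (x₀ i - a * v i)) / v i, fun l hl => ?_⟩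
      have h := ((hmemS l).mp hl i).2
      rw [le_div_iff₀ hpos]
      linarith
  have hS' : {l : ℝ | l • v + (pinv n H).mulVec (H.mulVec 1 - s) ∈ Set.Icc (0 : Fin n → ℝ) 1}
      = {l : ℝ | c - l ∈ S} := by
    ext l
    rw [Set.mem_setOf_eq, Set.mem_setOf_eq, hmemS, h2, Set.mem_Icc]
    simp only [Pi.le_def, Pi.add_apply, Pi.sub_apply, Pi.smul_apply, Pi.zero_apply,
      Pi.one_apply, smul_eq_mul]
    constructor
    · rintro ⟨hl, hr⟩ i
      have hl' := hl i
      have hr' := hr i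
      constructor <;> nlinarith [hl i, hr i]
    · intro h
      refine ⟨fun i => ?_, fun i => ?_⟩ <;> have := h i <;> nlinarith [(h i).1, (h i).2]
  have : fmin n H v (H.mulVec 1 - s) = c - sSup S := by
    rw [fmin, hS', sInf_reflect S c hne hbdd]
  rw [fmax, this, ← hS]
  ring
end

section
/- Let H be a real n_r × n matrix with nonnegative entries, α ∈ [0,1]^n ordered descending, and let X be any random vector with values in [0,1]^n and E[X] = α. Then the trace of the covariance matrix of HX satisfies tr(Cov(HX)) ≤ Σ_{i=1}^n Σ_{j=1}^n g_{ij} (min(α_i,α_j) − α_i α_j), where g_{ij} = h_iᵀ h_j are the entries of the Gram matrix HᵀH, and equality is attained by the maximally correlated binary distribution with marginal means α. -/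
/-
Writing `H x - H α = ∑ i, (x i - α i) • hᵢ`, the trace of the covariance of `H X` is
`∑ i j, gᵢⱼ Cov(Xᵢ, Xⱼ)` for every distribution. As `gᵢⱼ ≥ 0`, it suffices to bound each
covariance, and for `[0,1]`-valued variables `E[Xᵢ Xⱼ] ≤ min (E Xᵢ) (E Xⱼ)`. Under the maximally
correlated distribution `Xᵢ Xⱼ = X_{max i j}`, the indicator that the mass point lies beyond
`max i j`; its probability telescopes to `α (max i j) = min (α i) (α j)` since `α` is decreasing,
so every covariance bound is an equality.
-/

open MeasureTheory

/-- `stepVal α k` is the auxiliary sequence `1, α₀, α₁, …, α_{n-1}, 0, 0, …`. -/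
noncomputable def stepVal (n : ℕ) (α : Fin n → ℝ) (k : ℕ) : ℝ :=
  if k = 0 then 1 else if h : k - 1 < n then α ⟨k - 1, h⟩ else 0

/-- The mass point `e₁ + ⋯ + e_k` (the first `k` coordinates equal `1`). -/
def massPoint (n : ℕ) (k : ℕ) : Fin n → ℝ := fun i => if (i : ℕ) < k then 1 else 0

/-- The maximally correlated binary distribution with marginal means `α`. -/
noncomputable def maxCorrDist (n : ℕ) (α : Fin n → ℝ) : Measure (Fin n → ℝ) :=
  ∑ k ∈ Finset.range (n + 1),
    ENNReal.ofReal (stepVal n α k - stepVal n α (k + 1)) • Measure.dirac (massPoint n k)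

open Finset Matrix ProbabilityTheory

section QuadraticForm

variable {ι κ : Type*} [Fintype ι]

theorem Matrix.sq_mulVec_sub_mulVec_apply (H : Matrix κ ι ℝ) (v a : ι → ℝ) (k : κ) :
    ((H *ᵥ v) k - (H *ᵥ a) k) ^ 2 = ∑ i, ∑ j, H k i * H k j * ((v i - a i) * (v j - a j)) := by
  rw [← Pi.sub_apply, ← Matrix.mulVec_sub, Matrix.mulVec, dotProduct, sq, sum_mul_sum]
  exact sum_congr rfl fun i _ => sum_congr rfl fun j _ => by simp only [Pi.sub_apply]; ring

theorem sum_integral_sq_mulVec_sub [Fintype κ] {Ω : Type*} [MeasurableSpace Ω] (μ : Measure Ω)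
    (H : Matrix κ ι ℝ) (X : Ω → ι → ℝ) (a : ι → ℝ)
    (hX : ∀ i j, Integrable (fun ω => (X ω i - a i) * (X ω j - a j)) μ) :
    ∑ k, ∫ ω, ((H *ᵥ X ω) k - (H *ᵥ a) k) ^ 2 ∂μ =
      ∑ i, ∑ j, (∑ k, H k i * H k j) * ∫ ω, (X ω i - a i) * (X ω j - a j) ∂μ := by
  have hk : ∀ k, ∫ ω, ((H *ᵥ X ω) k - (H *ᵥ a) k) ^ 2 ∂μ =
      ∑ i, ∑ j, H k i * H k j * ∫ ω, (X ω i - a i) * (X ω j - a j) ∂μ := by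
    intro k
    simp_rw [Matrix.sq_mulVec_sub_mulVec_apply]
    rw [integral_finsetSum _ fun i _ => integrable_finsetSum _ fun j _ => (hX i j).const_mul _]
    refine sum_congr rfl fun i _ => ?_
    rw [integral_finsetSum _ fun j _ => (hX i j).const_mul _]
    exact sum_congr rfl fun j _ => integral_const_mul _ _
  simp_rw [hk, sum_mul]
  rw [sum_comm]
  exact sum_congr rfl fun i _ => sum_comm

end QuadraticForm

section UnitIntervalValued

variable {Ω : Type*} [MeasurableSpace Ω] {μ : Measure Ω}

theorem memLp_of_ae_mem_Icc_zero_one [IsFiniteMeasure μ] {Y : Ω → ℝ}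
    (hY : AEStronglyMeasurable Y μ) (hY01 : ∀ᵐ ω ∂μ, Y ω ∈ Set.Icc 0 1)
    (p : ENNReal) : MemLp Y p μ :=
  MemLp.of_bound hY 1 <| hY01.mono fun _ h => by
    rw [Real.norm_eq_abs, abs_le]; constructor <;> linarith [h.1, h.2]

theorem covariance_le_min_sub_mul [IsProbabilityMeasure μ] {Y Z : Ω → ℝ}
    (hY : AEStronglyMeasurable Y μ) (hZ : AEStronglyMeasurable Z μ)
    (hY01 : ∀ᵐ ω ∂μ, Y ω ∈ Set.Icc 0 1) (hZ01 : ∀ᵐ ω ∂μ, Z ω ∈ Set.Icc 0 1) :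
    cov[Y, Z; μ] ≤ min μ[Y] μ[Z] - μ[Y] * μ[Z] := by
  have hYL := memLp_of_ae_mem_Icc_zero_one hY hY01 2
  have hZL := memLp_of_ae_mem_Icc_zero_one hZ hZ01 2
  have hYZ : Integrable (Y * Z) μ := hYL.integrable_mul hZL
  rw [covariance_eq_sub hYL hZL]
  gcongr
  refine le_min (integral_mono_ae hYZ (hYL.integrable one_le_two) ?_)
    (integral_mono_ae hYZ (hZL.integrable one_le_two) ?_)
  all_goals
    filter_upwards [hY01, hZ01] with ω hYω hZω
    simp only [Pi.mul_apply]
    nlinarith [hYω.1, hYω.2, hZω.1, hZω.2]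

end UnitIntervalValued

theorem Finset.sum_Ico_sub' {M : Type*} [AddCommGroup M] (f : ℕ → M) {m n : ℕ} (h : m ≤ n) :
    ∑ i ∈ Ico m n, (f i - f (i + 1)) = f m - f n := by
  simpa only [neg_sub_neg] using sum_Ico_sub (fun i => -f i) h

variable {n : ℕ} {α : Fin n → ℝ}

theorem stepVal_zero : stepVal n α 0 = 1 := rfl

theorem stepVal_add_one (k : ℕ) :
    stepVal n α (k + 1) = if h : k < n then α ⟨k, h⟩ else 0 := rfl

theorem stepVal_coe_add_one (i : Fin n) : stepVal n α ((i : ℕ) + 1) = α i := by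
  simp [stepVal_add_one]

theorem stepVal_add_one_self : stepVal n α (n + 1) = 0 := by
  simp [stepVal_add_one]

theorem antitone_stepVal (hα : ∀ i, α i ∈ Set.Icc 0 1) (hmono : Antitone α) :
    Antitone (stepVal n α) := by
  refine antitone_nat_of_succ_le fun m => ?_
  rcases m with _ | m
  · rw [stepVal_zero, stepVal_add_one]
    split_ifs
    exacts [(hα _).2, zero_le_one]
  · rw [stepVal_add_one, stepVal_add_one]
    split_ifs with h h'
    · exact hmono (Fin.mk_le_mk.2 m.le_succ)
    · omega
    · exact (hα _).1
    · exact le_rfl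

theorem sum_stepVal_sub_mul_massPoint (i : Fin n) :
    ∑ m ∈ range (n + 1), (stepVal n α m - stepVal n α (m + 1)) * massPoint n m i = α i := by
  have hsupp : (range (n + 1)).filter (fun m => (i : ℕ) < m) = Ico ((i : ℕ) + 1) (n + 1) := by
    ext m; simp only [mem_filter, mem_range, mem_Ico]; omega
  simp only [massPoint, mul_ite, mul_one, mul_zero]
  rw [← sum_filter, hsupp, sum_Ico_sub' _ (by omega), stepVal_coe_add_one, stepVal_add_one_self,
    sub_zero]

theorem massPoint_mul_massPoint (m : ℕ) (i j : Fin n) :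
    massPoint n m i * massPoint n m j = massPoint n m (max i j) := by
  simp only [massPoint, Fin.coe_max, max_lt_iff]
  split_ifs <;> simp_all

theorem integrable_maxCorrDist (f : (Fin n → ℝ) → ℝ) : Integrable f (maxCorrDist n α) :=
  integrable_finsetSum_measure.2 fun _ _ =>
    (integrable_dirac enorm_lt_top).smul_measure ENNReal.ofReal_ne_top

theorem integral_maxCorrDist (hα : ∀ i, α i ∈ Set.Icc 0 1) (hmono : Antitone α)
    (f : (Fin n → ℝ) → ℝ) :
    ∫ x, f x ∂maxCorrDist n α =
      ∑ m ∈ range (n + 1), (stepVal n α m - stepVal n α (m + 1)) * f (massPoint n m) := by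
  rw [maxCorrDist, integral_finsetSum_measure fun _ _ =>
    (integrable_dirac enorm_lt_top).smul_measure ENNReal.ofReal_ne_top]
  refine sum_congr rfl fun m _ => ?_
  rw [integral_smul_measure, integral_dirac, smul_eq_mul,
    ENNReal.toReal_ofReal (sub_nonneg.2 (antitone_stepVal hα hmono m.le_succ))]

theorem integral_mul_maxCorrDist (hα : ∀ i, α i ∈ Set.Icc 0 1) (hmono : Antitone α)
    (i j : Fin n) :
    ∫ x, (x i - α i) * (x j - α j) ∂maxCorrDist n α = min (α i) (α j) - α i * α j := by
  set w : ℕ → ℝ := fun m => stepVal n α m - stepVal n α (m + 1)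
  have hw : ∑ m ∈ range (n + 1), w m = 1 := by
    rw [sum_range_sub', stepVal_zero, stepVal_add_one_self, sub_zero]
  have hpair :
      ∑ m ∈ range (n + 1), w m * (massPoint n m i * massPoint n m j) = min (α i) (α j) := by
    rw [← hmono.map_max]
    simp only [massPoint_mul_massPoint, w, sum_stepVal_sub_mul_massPoint]
  rw [integral_maxCorrDist hα hmono]
  calc ∑ m ∈ range (n + 1), w m * ((massPoint n m i - α i) * (massPoint n m j - α j))
      = ∑ m ∈ range (n + 1), w m * (massPoint n m i * massPoint n m j)
          - α j * ∑ m ∈ range (n + 1), w m * massPoint n m i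
          - α i * ∑ m ∈ range (n + 1), w m * massPoint n m j
          + α i * α j * ∑ m ∈ range (n + 1), w m := by
        simp only [mul_sum, ← sum_sub_distrib, ← sum_add_distrib]
        exact sum_congr rfl fun m _ => by ring
    _ = min (α i) (α j) - α i * α j := by
        rw [hpair, hw, sum_stepVal_sub_mul_massPoint, sum_stepVal_sub_mul_massPoint]; ring

theorem trace_covariance_max
    {Ω : Type*} [MeasurableSpace Ω] (μ : Measure Ω) [IsProbabilityMeasure μ]
    (nr n : ℕ) (H : Matrix (Fin nr) (Fin n) ℝ) (hH : ∀ k i, 0 ≤ H k i)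
    (α : Fin n → ℝ) (hα01 : ∀ i, α i ∈ Set.Icc (0 : ℝ) 1) (hmono : Antitone α)
    (X : Ω → Fin n → ℝ) (hXmeas : Measurable X)
    (hX01 : ∀ᵐ ω ∂μ, X ω ∈ Set.Icc (0 : Fin n → ℝ) 1)
    (hmean : ∀ i, ∫ ω, X ω i ∂μ = α i) :
    (∑ k, ∫ ω, (H.mulVec (X ω) k - H.mulVec α k) ^ 2 ∂μ) ≤
      ∑ i, ∑ j, (∑ k, H k i * H k j) * (min (α i) (α j) - α i * α j) ∧
    (∑ k, ∫ x, (H.mulVec x k - H.mulVec α k) ^ 2 ∂(maxCorrDist n α)) =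
      ∑ i, ∑ j, (∑ k, H k i * H k j) * (min (α i) (α j) - α i * α j) := by
  have hXi : ∀ i, AEStronglyMeasurable (fun ω => X ω i) μ := fun i =>
    ((measurable_pi_apply i).comp hXmeas).aestronglyMeasurable
  have hXi01 : ∀ i, ∀ᵐ ω ∂μ, X ω i ∈ Set.Icc 0 1 := fun i =>
    hX01.mono fun _ hω => ⟨hω.1 i, hω.2 i⟩
  have hcentered : ∀ i, MemLp (fun ω => X ω i - α i) 2 μ := fun i =>
    (memLp_of_ae_mem_Icc_zero_one (hXi i) (hXi01 i) 2).sub (memLp_const _)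
  have hcov : ∀ i j, ∫ ω, (X ω i - α i) * (X ω j - α j) ∂μ ≤ min (α i) (α j) - α i * α j := by
    intro i j
    simpa only [covariance, hmean] using
      covariance_le_min_sub_mul (hXi i) (hXi j) (hXi01 i) (hXi01 j)
  constructor
  · rw [sum_integral_sq_mulVec_sub μ H X α fun i j => (hcentered i).integrable_mul (hcentered j)]
    exact sum_le_sum fun i _ => sum_le_sum fun j _ => mul_le_mul_of_nonneg_left (hcov i j)
      (sum_nonneg fun k _ => mul_nonneg (hH k i) (hH k j))
  · refine (sum_integral_sq_mulVec_sub _ H id α fun i j => integrable_maxCorrDist _).trans ?_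
    simp only [id, integral_mul_maxCorrDist hα01 hmono]
end

section
/- Let H̃ ∈ ℝ^{(n−1)×n} have full row rank with unit null vector v such that 𝟙ᵀv > 0, let S be a random vector with values in the zonotope R(H̃), let τ ∈ [0,1], and define X = φ(S) with φ(s) = ( τ f_min(s) + (1−τ)(𝟙ᵀv − f_min(H̃𝟙 − s)) ) v + H̃⁺ s. Then X takes values in [0,1]^n almost surely and H̃X = S almost surely. -/
open Matrix MeasureTheory

/-- The signaling map `φ` sending an equivalent input `s` to a feasible channel input. -/
noncomputable def signaling (n : ℕ) (H : Matrix (Fin (n - 1)) (Fin n) ℝ)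
    (v : Fin n → ℝ) (τ : ℝ) (s : Fin (n - 1) → ℝ) : Fin n → ℝ :=
  (τ * fmin n H v s + (1 - τ) * ((∑ i, v i) - fmin n H v (H.mulVec 1 - s))) • v +
    (pinv n H).mulVec s

section
variable {n : ℕ} (hn : 1 ≤ n) {H : Matrix (Fin (n - 1)) (Fin n) ℝ} (hrank : H.rank = n - 1)
  {v : Fin n → ℝ} (hv : H.mulVec v = 0) (hunit : ∑ i, (v i) ^ 2 = 1)

include hrank in
lemma aux_hu : IsUnit (H * Hᵀ) := by
  have h1 : (H * Hᵀ).rank = n - 1 := by rw [Matrix.rank_self_mul_transpose, hrank]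
  have h2 : Function.Surjective (H * Hᵀ).mulVecLin := by
    rw [← LinearMap.range_eq_top]
    apply Submodule.eq_top_of_finrank_eq
    rw [← Matrix.rank, h1]
    simp [Module.finrank_fintype_fun_eq_card]
  rw [← Matrix.mulVec_surjective_iff_isUnit]
  exact h2

include hrank in
lemma aux_hmv (s : Fin (n-1) → ℝ) : H.mulVec ((pinv n H).mulVec s) = s := by
  rw [Matrix.mulVec_mulVec, pinv, ← Matrix.mul_assoc,
    Matrix.mul_nonsing_inv _ ((Matrix.isUnit_iff_isUnit_det _).mp (aux_hu hrank)),
    Matrix.one_mulVec]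

include hn hrank hv hunit in
lemma aux_hker : ∀ y : Fin n → ℝ, H.mulVec y = 0 → ∃ c : ℝ, y = c • v := by
  have hv0 : v ≠ 0 := by
    intro h; rw [h] at hunit; simp at hunit
  have hsp : Submodule.span ℝ {v} ≤ LinearMap.ker H.mulVecLin := by
    rw [Submodule.span_singleton_le_iff_mem, LinearMap.mem_ker, Matrix.mulVecLin_apply]
    exact hv
  have hfr : Module.finrank ℝ (LinearMap.ker H.mulVecLin) = 1 := by
    have := LinearMap.finrank_range_add_finrank_ker H.mulVecLin
    rw [← Matrix.rank, hrank, Module.finrank_fintype_fun_eq_card, Fintype.card_fin] at this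
    omega
  have heq : Submodule.span ℝ {v} = LinearMap.ker H.mulVecLin := by
    apply Submodule.eq_of_le_of_finrank_eq hsp
    rw [finrank_span_singleton hv0, hfr]
  intro y hy
  have : y ∈ Submodule.span ℝ {v} := by
    rw [heq, LinearMap.mem_ker, Matrix.mulVecLin_apply]; exact hy
  obtain ⟨c, hc⟩ := Submodule.mem_span_singleton.mp this
  exact ⟨c, hc.symm⟩

include hv in
lemma aux_hvdot (s : Fin (n-1) → ℝ) : v ⬝ᵥ (pinv n H).mulVec s = 0 := by
  rw [Matrix.dotProduct_mulVec, pinv, ← Matrix.vecMul_vecMul, Matrix.vecMul_transpose, hv]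
  simp

include hn hrank hv hunit in
lemma aux_ones : (1 : Fin n → ℝ) = (∑ i, v i) • v + (pinv n H).mulVec (H.mulVec 1) := by
  obtain ⟨c, hc⟩ := aux_hker hn hrank hv hunit
    ((1 : Fin n → ℝ) - (pinv n H).mulVec (H.mulVec 1))
    (by rw [Matrix.mulVec_sub, aux_hmv hrank, sub_self])
  have hdot : v ⬝ᵥ ((1 : Fin n → ℝ) - (pinv n H).mulVec (H.mulVec 1)) = ∑ i, v i := by
    rw [dotProduct_sub, aux_hvdot hv]
    simp [dotProduct]
  rw [hc] at hdot
  have hvv : v ⬝ᵥ v = 1 := by rw [← hunit]; simp [dotProduct, sq]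
  rw [dotProduct_smul, hvv, smul_eq_mul, mul_one] at hdot
  rw [← hdot, ← hc]
  abel

include hn hrank hv hunit in
lemma aux_fmin_mem (x : Fin n → ℝ) (hx : x ∈ Set.Icc (0 : Fin n → ℝ) 1) :
    fmin n H v (H.mulVec x) • v + (pinv n H).mulVec (H.mulVec x)
      ∈ Set.Icc (0 : Fin n → ℝ) 1 := by
  set w := (pinv n H).mulVec (H.mulVec x) with hw
  set L := {l : ℝ | l • v + w ∈ Set.Icc (0 : Fin n → ℝ) 1} with hL
  obtain ⟨c, hc⟩ := aux_hker hn hrank hv hunit (x - w)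
    (by rw [Matrix.mulVec_sub, hw, aux_hmv hrank, sub_self])
  have hne : L.Nonempty := ⟨c, by simp only [hL, Set.mem_setOf_eq, ← hc]; simpa using hx⟩
  have hclosed : IsClosed L := by
    have : L = (fun l : ℝ => l • v + w) ⁻¹' Set.Icc (0 : Fin n → ℝ) 1 := rfl
    rw [this]
    exact (isClosed_Icc).preimage (by fun_prop)
  obtain ⟨i, hi⟩ : ∃ i, v i ≠ 0 := by
    by_contra h
    push_neg at h
    rw [Finset.sum_eq_zero (fun i _ => by rw [h i]; ring)] at hunit
    norm_num at hunit
  have hbdd : BddBelow L := by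
    refine ⟨-(1 + |w i|) / |v i|, fun l hl => ?_⟩
    have h1 : 0 ≤ l * v i + w i := by
      have := hl.1 i
      simpa using this
    have h2 : l * v i + w i ≤ 1 := by
      have := hl.2 i
      simpa using this
    rw [div_le_iff₀ (abs_pos.mpr hi)]
    rcases abs_cases (v i) with ⟨ha, _⟩ | ⟨ha, _⟩ <;>
        rcases abs_cases (w i) with ⟨hb, _⟩ | ⟨hb, _⟩ <;>
      rw [ha, hb] <;> nlinarith
  exact hclosed.csInf_mem hne hbdd
end

section
variable {n : ℕ} (hn : 1 ≤ n) {H : Matrix (Fin (n - 1)) (Fin n) ℝ} (hrank : H.rank = n - 1)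
  {v : Fin n → ℝ} (hv : H.mulVec v = 0) (hunit : ∑ i, (v i) ^ 2 = 1)

include hn hrank hv hunit in
lemma aux_fmax_mem (x : Fin n → ℝ) (hx : x ∈ Set.Icc (0 : Fin n → ℝ) 1) :
    ((∑ i, v i) - fmin n H v (H.mulVec 1 - H.mulVec x)) • v
      + (pinv n H).mulVec (H.mulVec x) ∈ Set.Icc (0 : Fin n → ℝ) 1 := by
  have hx' : (1 : Fin n → ℝ) - x ∈ Set.Icc (0 : Fin n → ℝ) 1 :=
    ⟨sub_nonneg.mpr hx.2, by simpa using sub_le_self (1 : Fin n → ℝ) hx.1⟩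
  have hsub : H.mulVec 1 - H.mulVec x = H.mulVec (1 - x) := (Matrix.mulVec_sub H 1 x).symm
  have hmem := aux_fmin_mem hn hrank hv hunit (1 - x) hx'
  set b := fmin n H v (H.mulVec (1 - x)) with hb
  rw [hsub]
  have hflip : b • v + (pinv n H).mulVec (H.mulVec (1 - x))
      = 1 - (((∑ i, v i) - b) • v + (pinv n H).mulVec (H.mulVec x)) := by
    rw [Matrix.mulVec_sub, Matrix.mulVec_sub]
    have h1 := aux_ones hn hrank hv hunit
    have h2 : (pinv n H).mulVec (H.mulVec 1) = 1 - (∑ i, v i) • v := by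
      nth_rewrite 2 [h1]; abel
    rw [sub_smul, h2]
    abel
  rw [hflip] at hmem
  obtain ⟨h0, h1⟩ := hmem
  exact ⟨by simpa [sub_le_self_iff] using h1, by simpa [sub_nonneg] using h0⟩
end


theorem signaling_feasible
    {Ω : Type*} [MeasurableSpace Ω] (μ : Measure Ω) [IsProbabilityMeasure μ]
    (n : ℕ) (hn : 1 ≤ n)
    (H : Matrix (Fin (n - 1)) (Fin n) ℝ) (hrank : H.rank = n - 1)
    (v : Fin n → ℝ) (hv : H.mulVec v = 0) (hunit : ∑ i, (v i) ^ 2 = 1)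
    (hvsum : 0 < ∑ i, v i)
    (τ : ℝ) (hτ : τ ∈ Set.Icc (0 : ℝ) 1)
    (S : Ω → Fin (n - 1) → ℝ)
    (hsupp : ∀ᵐ ω ∂μ, S ω ∈ (fun x => H.mulVec x) '' (Set.Icc (0 : Fin n → ℝ) 1)) :
    (∀ᵐ ω ∂μ, signaling n H v τ (S ω) ∈ Set.Icc (0 : Fin n → ℝ) 1) ∧
    (∀ᵐ ω ∂μ, H.mulVec (signaling n H v τ (S ω)) = S ω) := by
  have key : ∀ s : Fin (n-1) → ℝ, s ∈ (fun x => H.mulVec x) '' (Set.Icc (0 : Fin n → ℝ) 1) →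
      signaling n H v τ s ∈ Set.Icc (0 : Fin n → ℝ) 1 ∧ H.mulVec (signaling n H v τ s) = s := by
    rintro s ⟨x, hx, rfl⟩
    constructor
    · have ha := aux_fmin_mem hn hrank hv hunit x hx
      have hb := aux_fmax_mem hn hrank hv hunit x hx
      set a := fmin n H v (H.mulVec x) with hadef
      set b := (∑ i, v i) - fmin n H v (H.mulVec 1 - H.mulVec x) with hbdef
      set w := (pinv n H).mulVec (H.mulVec x) with hwdef
      rw [signaling, ← hadef, ← hbdef, ← hwdef]
      constructor <;> intro i
      · have h1 := ha.1 i
        have h3 := hb.1 i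
        simp only [Pi.add_apply, Pi.smul_apply, smul_eq_mul, Pi.zero_apply] at h1 h3 ⊢
        nlinarith [mul_nonneg hτ.1 h1, mul_nonneg (sub_nonneg.mpr hτ.2) h3]
      · have h2 := ha.2 i
        have h4 := hb.2 i
        simp only [Pi.add_apply, Pi.smul_apply, smul_eq_mul, Pi.one_apply] at h2 h4 ⊢
        nlinarith [mul_le_mul_of_nonneg_left h2 hτ.1,
          mul_le_mul_of_nonneg_left h4 (sub_nonneg.mpr hτ.2)]
    · rw [signaling, Matrix.mulVec_add, Matrix.mulVec_smul, hv, aux_hmv hrank]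
      simp
  constructor
  · filter_upwards [hsupp] with ω hω using (key _ hω).1
  · filter_upwards [hsupp] with ω hω using (key _ hω).2
end
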